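/- Stability of the local paths in k: if the endpoint of the path γ_k^{(x,n)} is open, i.e. ω(γ_k(k)) = 1, then the first k steps of γ_{k+1}^{(x,n)} coincide with γ_k^{(x,n)}. -/

import Mathlib

/-- A space-time site of `ℤ^d × ℤ`. -/
abbrev Site (d : ℕ) := (Fin d → ℤ) × ℤ

/-- The neighbourhood `U(x,n) = {(y,n+1) : ‖x − y‖_∞ ≤ 1}` of a site in the next generation. -/
def nbhd {d : ℕ} (p : Site d) : Set (Site d) :=
  {q | q.2 = p.2 + 1 ∧ ∀ i, |p.1 i - q.1 i| ≤ 1}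

/-- There is a directed open path of length `k` starting at `p` (all `k+1` sites on it open). -/
def hasOpenPath {d : ℕ} (ω : Site d → Bool) (p : Site d) (k : ℕ) : Prop :=
  ∃ γ : ℕ → (Fin d → ℤ), γ 0 = p.1 ∧
    (∀ j < k, ∀ i, |γ (j + 1) i - γ j i| ≤ 1) ∧
    (∀ j ≤ k, ω (γ j, p.2 + (j : ℤ)) = true)

/-- `ellSucc ω p` is `ℓ(p) + 1`, where `ℓ(p)` is the length of the longest directed open
path starting at `p` (with `ℓ(p) = −1`, i.e. `ellSucc ω p = 0`, at closed sites, and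
`ℓ(p) = ∞` on the backbone).  Shifting by one lets us work in `ℕ∞` instead of `{−1} ∪ ℕ∞`. -/
noncomputable def ellSucc {d : ℕ} (ω : Site d → Bool) (p : Site d) : ℕ∞ :=
  sSup {t : ℕ∞ | ∃ k : ℕ, t = (k : ℕ∞) + 1 ∧ hasOpenPath ω p k}

/-- The backbone `C` of the oriented percolation cluster: sites where `ℓ = ∞`. -/
def backbone {d : ℕ} (ω : Site d → Bool) : Set (Site d) := {p | ellSucc ω p = ⊤}

/-- `maximizers ω (k+1) p` is the set `M_k(p)` of maximisers over `U(p)` of the truncated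
length `ℓ_k = ℓ ∧ k` (in the shifted encoding: of `min (ℓ + 1) (k + 1)`), and
`maximizers ω 0 p = M_{−1}(p) = U(p)`. -/
noncomputable def maximizers {d : ℕ} (ω : Site d → Bool) : ℕ → Site d → Set (Site d)
  | 0, p => nbhd p
  | k + 1, p =>
      {q ∈ nbhd p |
        min (ellSucc ω q) ((k : ℕ∞) + 1) =
          sSup ((fun r => min (ellSucc ω r) ((k : ℕ∞) + 1)) '' nbhd p)}

/-- `sel` is a valid local-selection rule for the random permutations encoded by the
rank function `rank`: `rank p` enumerates the neighbourhood `U(p)` injectively (this is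
the permutation `ω̃(p)`), and `sel k p` is the element of `maximizers ω k p`
(i.e. of `M_{k-1}(p)`, with `sel 0 p ∈ M_{−1}(p) = U(p)`) appearing first in this
permutation. -/
def IsSelection {d : ℕ} (ω : Site d → Bool) (rank : Site d → Site d → ℕ)
    (sel : ℕ → Site d → Site d) : Prop :=
  (∀ p : Site d, Set.InjOn (rank p) (nbhd p)) ∧
    ∀ (k : ℕ) (p : Site d),
      sel k p ∈ maximizers ω k p ∧ ∀ q ∈ maximizers ω k p, rank p (sel k p) ≤ rank p q

/-- The locally constructed path `γ_k^{(x,n)}` of length `k` started at `p = (x,n)`: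
`γ_k(0) = p` and `γ_k(j+1) = m_{k−j−2}(γ_k(j))`, where `m_i` is the first element of
`M_i` in the permutation (in the shifted indexing, `γ_k(j+1) = sel (k−j−1) (γ_k(j))`). -/
def gammaPath {d : ℕ} (sel : ℕ → Site d → Site d) (p : Site d) (k : ℕ) : ℕ → Site d
  | 0 => p
  | j + 1 => sel (k - j - 1) (gammaPath sel p k j)

/-!
Write `L = ellSucc ω` and `γ = γ_k`. The step `γ(j+1)` maximizes `min L (k-j-1)` over
`U(γ(j))`, while the corresponding step of `γ_{k+1}` maximizes `min L (k-j)`; the two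
first-ranked choices coincide as soon as `γ(j+1)` is also a maximizer of `min L (k-j)`,
which holds whenever `L(γ(j+1)) ≠ k-j-1`. This invariant is proved backwards along the
path: it holds at the open endpoint (`L(γ(k)) ≥ 1`), and if a site `q` has `L q = n + 1`,
then every maximizer of `min L n` over `U(q)` has `L = n` exactly.
-/

variable {d : ℕ} {ω : Site d → Bool} {p q : Site d}

lemma hasOpenPath.mono {k j : ℕ} (h : hasOpenPath ω p k) (hjk : j ≤ k) :
    hasOpenPath ω p j :=
  let ⟨γ, h0, hstep, hopen⟩ := h
  ⟨γ, h0, fun i hi => hstep i (by omega), fun i hi => hopen i (by omega)⟩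

lemma hasOpenPath_zero_iff : hasOpenPath ω p 0 ↔ ω p = true := by
  constructor
  · rintro ⟨γ, h0, -, hopen⟩
    simpa [h0] using hopen 0 le_rfl
  · intro hp
    refine ⟨fun _ => p.1, rfl, fun j hj => absurd hj (Nat.not_lt_zero j), fun j hj => ?_⟩
    obtain rfl := Nat.le_zero.mp hj
    simpa using hp

lemma hasOpenPath_succ_iff {k : ℕ} :
    hasOpenPath ω p (k + 1) ↔ ω p = true ∧ ∃ r ∈ nbhd p, hasOpenPath ω r k := by
  constructor
  · intro h
    refine ⟨hasOpenPath_zero_iff.mp (h.mono (k + 1).zero_le), ?_⟩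
    obtain ⟨γ, h0, hstep, hopen⟩ := h
    refine ⟨(γ 1, p.2 + 1), ⟨rfl, fun i => ?_⟩, fun j => γ (j + 1), rfl,
      fun j hj => hstep (j + 1) (by omega), fun j hj => ?_⟩
    · rw [← h0, abs_sub_comm]
      exact hstep 0 k.succ_pos i
    · convert hopen (j + 1) (by omega) using 3
      push_cast
      ring
  · rintro ⟨hp, r, hr, γ, h0, hstep, hopen⟩
    refine ⟨fun j => Nat.casesOn j p.1 γ, rfl, fun j hj i => ?_, fun j hj => ?_⟩
    · cases j with
      | zero =>
        rw [abs_sub_comm]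
        simpa [h0] using hr.2 i
      | succ j => exact hstep j (by omega) i
    · cases j with
      | zero => simpa using hp
      | succ j =>
        convert hopen j (by omega) using 3
        rw [hr.1]
        push_cast
        ring

lemma natCast_add_one_le_ellSucc_iff {n : ℕ} :
    (n : ℕ∞) + 1 ≤ ellSucc ω p ↔ hasOpenPath ω p n := by
  refine ⟨fun h => ?_, fun h => le_sSup ⟨n, rfl, h⟩⟩
  by_contra hn
  have hle : ellSucc ω p ≤ n := by
    refine sSup_le ?_
    rintro t ⟨k, rfl, hk⟩
    have hkn : k < n := lt_of_not_ge fun hnk => hn (hk.mono hnk)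
    exact_mod_cast hkn
  exact (h.trans hle).not_gt ((ENat.lt_add_one_iff (ENat.natCast_ne_top n)).mpr le_rfl)

lemma ellSucc_le_natCast_iff {n : ℕ} : ellSucc ω p ≤ n ↔ ¬ hasOpenPath ω p n := by
  rw [← natCast_add_one_le_ellSucc_iff, ENat.add_one_le_iff (ENat.natCast_ne_top n), not_lt]

lemma ellSucc_ne_zero (hp : ω p = true) : ellSucc ω p ≠ 0 := by
  rw [← pos_iff_ne_zero, ← ENat.add_one_le_iff ENat.zero_ne_top, ← Nat.cast_zero,
    natCast_add_one_le_ellSucc_iff, hasOpenPath_zero_iff]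
  exact hp

lemma mem_maximizers_iff {m : ℕ} : q ∈ maximizers ω m p ↔
    q ∈ nbhd p ∧ ∀ r ∈ nbhd p, min (ellSucc ω r) m ≤ min (ellSucc ω q) m := by
  cases m with
  | zero => simp [maximizers]
  | succ m =>
    simp only [maximizers, Set.mem_ofPred_eq, Nat.cast_succ]
    refine and_congr_right fun hq =>
      ⟨fun hmax r hr => hmax ▸ le_sSup ⟨r, hr, rfl⟩, fun h => le_antisymm ?_ ?_⟩
    · exact le_sSup ⟨q, hq, rfl⟩
    · exact sSup_le (by rintro _ ⟨r, hr, rfl⟩; exact h r hr)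

lemma maximizers_subset_nbhd (m : ℕ) (p : Site d) : maximizers ω m p ⊆ nbhd p :=
  fun _ hq => (mem_maximizers_iff.mp hq).1

lemma maximizers_succ_subset (m : ℕ) (p : Site d) :
    maximizers ω (m + 1) p ⊆ maximizers ω m p := by
  intro q hq
  obtain ⟨hqp, hmax⟩ := mem_maximizers_iff.mp hq
  refine mem_maximizers_iff.mpr ⟨hqp, fun r hr => ?_⟩
  have hle : (m : ℕ∞) ≤ ((m + 1 : ℕ) : ℕ∞) := by exact_mod_cast m.le_succ
  calc min (ellSucc ω r) m = min (min (ellSucc ω r) ((m + 1 : ℕ) : ℕ∞)) m := by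
        rw [min_assoc, min_eq_right hle]
    _ ≤ min (min (ellSucc ω q) ((m + 1 : ℕ) : ℕ∞)) m := min_le_min_right _ (hmax r hr)
    _ = min (ellSucc ω q) m := by rw [min_assoc, min_eq_right hle]

lemma ellSucc_eq_of_mem_maximizers {n : ℕ} (hq : q ∈ maximizers ω n p)
    (hp : ellSucc ω p = n + 1) : ellSucc ω q = n := by
  have hpath : hasOpenPath ω p n := natCast_add_one_le_ellSucc_iff.mp hp.ge
  have hno : ¬ hasOpenPath ω p (n + 1) := by
    rw [← ellSucc_le_natCast_iff, hp, Nat.cast_succ]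
  have hp_open : ω p = true := hasOpenPath_zero_iff.mp (hpath.mono n.zero_le)
  obtain ⟨hqp, hmax⟩ := mem_maximizers_iff.mp hq
  refine le_antisymm ?upper ?lower
  case upper =>
    exact ellSucc_le_natCast_iff.mpr fun hq' =>
      hno (hasOpenPath_succ_iff.mpr ⟨hp_open, q, hqp, hq'⟩)
  case lower =>
    cases n with
    | zero => simp
    | succ n =>
      obtain ⟨-, r, hr, hr'⟩ := hasOpenPath_succ_iff.mp hpath
      have hr_le : ((n + 1 : ℕ) : ℕ∞) ≤ ellSucc ω r := by
        rw [Nat.cast_succ]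
        exact natCast_add_one_le_ellSucc_iff.mpr hr'
      have h := hmax r hr
      rw [min_eq_right hr_le] at h
      exact (le_min_iff.mp h).1

lemma mem_maximizers_succ {m : ℕ} (hq : q ∈ maximizers ω m p) (hne : ellSucc ω q ≠ m) :
    q ∈ maximizers ω (m + 1) p := by
  obtain ⟨hqp, hmax⟩ := mem_maximizers_iff.mp hq
  refine mem_maximizers_iff.mpr ⟨hqp, fun r hr => ?_⟩
  rcases hne.lt_or_gt with hlt | hgt
  · -- below the truncation level, `q` maximizes `L` itself
    have h := hmax r hr
    rw [min_eq_left hlt.le] at h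
    have hr_lt : ellSucc ω r < m := (min_lt_iff.mp (h.trans_lt hlt)).resolve_right (lt_irrefl _)
    rw [min_eq_left hr_lt.le] at h
    exact min_le_min_right _ h
  · rw [min_eq_right (show ((m + 1 : ℕ) : ℕ∞) ≤ ellSucc ω q by
      rw [Nat.cast_succ]; exact Order.add_one_le_of_lt hgt)]
    exact min_le_right _ _

section Selection

variable {rank : Site d → Site d → ℕ} {sel : ℕ → Site d → Site d}

lemma IsSelection.sel_succ_eq (hsel : IsSelection ω rank sel) {m : ℕ}
    (h : sel m p ∈ maximizers ω (m + 1) p) : sel (m + 1) p = sel m p := by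
  obtain ⟨hinj, hfirst⟩ := hsel
  have hsucc := hfirst (m + 1) p
  have hm := hfirst m p
  have hsucc_mem : sel (m + 1) p ∈ maximizers ω m p := maximizers_succ_subset m p hsucc.1
  exact hinj p (maximizers_subset_nbhd _ p hsucc.1) (maximizers_subset_nbhd _ p hm.1)
    (le_antisymm (hsucc.2 _ h) (hm.2 _ hsucc_mem))

lemma gammaPath_succ_mem_maximizers (hsel : IsSelection ω rank sel) (p : Site d) (k j : ℕ) :
    gammaPath sel p k (j + 1) ∈ maximizers ω (k - j - 1) (gammaPath sel p k j) :=
  (hsel.2 _ _).1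

lemma ellSucc_gammaPath_ne (hsel : IsSelection ω rank sel) {k : ℕ}
    (hopen : ω (gammaPath sel p k k) = true) (t j : ℕ) (hjk : j + t + 1 = k) :
    ellSucc ω (gammaPath sel p k (j + 1)) ≠ t := by
  induction t generalizing j with
  | zero =>
    rw [show j + 1 = k by omega]
    exact_mod_cast ellSucc_ne_zero hopen
  | succ t ih =>
    have hmem := gammaPath_succ_mem_maximizers hsel p k (j + 1)
    rw [show k - (j + 1) - 1 = t by omega] at hmem
    exact fun h => ih (j + 1) (by omega) (ellSucc_eq_of_mem_maximizers hmem (by exact_mod_cast h))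

lemma gammaPath_succ_mem_maximizers_succ (hsel : IsSelection ω rank sel) {k : ℕ}
    (hopen : ω (gammaPath sel p k k) = true) {t j : ℕ} (hjk : j + t + 1 = k) :
    gammaPath sel p k (j + 1) ∈ maximizers ω (t + 1) (gammaPath sel p k j) := by
  have hmem := gammaPath_succ_mem_maximizers hsel p k j
  rw [show k - j - 1 = t by omega] at hmem
  exact mem_maximizers_succ hmem (ellSucc_gammaPath_ne hsel hopen t j hjk)

end Selection

/-- Stability in `k`: if the endpoint of `γ_k^{(x,n)}` is open, i.e. `ω(γ_k(k)) = 1`,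
then the path `γ_{k+1}^{(x,n)}` restricted to its first `k` steps equals `γ_k^{(x,n)}`. -/
theorem gammaPath_stable (d : ℕ) (ω : Site d → Bool) (rank : Site d → Site d → ℕ)
    (sel : ℕ → Site d → Site d) (hsel : IsSelection ω rank sel)
    (p : Site d) (k : ℕ) (hopen : ω (gammaPath sel p k k) = true) :
    ∀ j ≤ k, gammaPath sel p (k + 1) j = gammaPath sel p k j := by
  intro j hj
  induction j with
  | zero => rfl
  | succ j ih =>
    obtain ⟨t, htk⟩ : ∃ t, j + t + 1 = k := ⟨k - j - 1, by omega⟩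
    have hstep : gammaPath sel p (k + 1) (j + 1) = sel (t + 1) (gammaPath sel p k j) := by
      rw [gammaPath, ih (by omega), show k + 1 - j - 1 = t + 1 by omega]
    have hstep' : gammaPath sel p k (j + 1) = sel t (gammaPath sel p k j) := by
      rw [gammaPath, show k - j - 1 = t by omega]
    rw [hstep, hstep', hsel.sel_succ_eq]
    exact hstep' ▸ gammaPath_succ_mem_maximizers_succ hsel hopen htk
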